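/- Let W*, R₀* ∈ ℂ^{M×M} be Hermitian PSD with tr(h hᴴ W*) ≥ Γσ² and tr(W* + R₀*) ≤ P₀, where hᴴ W* h > 0. Define Ŵ = W* h hᴴ W* / (hᴴ W* h) and R̂₀ = R₀* + W* − Ŵ. Then Ŵ and R̂₀ are Hermitian PSD, rank(Ŵ) ≤ 1, tr(h hᴴ Ŵ) ≥ Γσ², and tr(Ŵ + R̂₀) ≤ P₀. -/

import Mathlib

open Matrix
open scoped ComplexOrder

private lemma aux_vmv_mulVec {M : ℕ} (u v x : Fin M → ℂ) :
    vecMulVec u v *ᵥ x = (v ⬝ᵥ x) • u := by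
  ext i
  simp [vecMulVec_apply, mulVec, dotProduct, Finset.mul_sum, mul_assoc, mul_comm, mul_left_comm]

private lemma aux_star_dot {M : ℕ} (v w : Fin M → ℂ) :
    star v ⬝ᵥ w = star (star w ⬝ᵥ v) := by
  simp [dotProduct, mul_comm]

private lemma aux_trace {M : ℕ} (a b : Fin M → ℂ) (B : Matrix (Fin M) (Fin M) ℂ) :
    (vecMulVec a b * B).trace = b ⬝ᵥ (B *ᵥ a) := by
  simp [trace, diag, mul_apply, vecMulVec_apply, mulVec, dotProduct, Finset.mul_sum]
  rw [Finset.sum_comm]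
  congr 1; ext j; congr 1; ext i; ring

private lemma aux_cs {M : ℕ} (a b : Fin M → ℂ) :
    ‖(star a ⬝ᵥ b)‖ ^ 2 ≤ (star a ⬝ᵥ a).re * (star b ⬝ᵥ b).re := by
  set a' : EuclideanSpace ℂ (Fin M) := (WithLp.equiv 2 (Fin M → ℂ)).symm a
  set b' : EuclideanSpace ℂ (Fin M) := (WithLp.equiv 2 (Fin M → ℂ)).symm b
  have key : ∀ u v : Fin M → ℂ, star u ⬝ᵥ v = inner (𝕜 := ℂ)
      ((WithLp.equiv 2 (Fin M → ℂ)).symm u) ((WithLp.equiv 2 (Fin M → ℂ)).symm v) := by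
    intro u v
    simp [dotProduct, PiLp.inner_apply, RCLike.inner_apply, mul_comm]
  rw [key a b, key a a, key b b, pow_two]
  have h2 := inner_mul_inner_self_le (𝕜 := ℂ) a' b'
  rw [← inner_conj_symm b' a', RCLike.norm_conj] at h2
  exact h2

private lemma aux_vmv_ct {M : ℕ} (u : Fin M → ℂ) :
    (vecMulVec u (star u))ᴴ = vecMulVec u (star u) := by
  ext i j
  simp [vecMulVec_apply, conjTranspose_apply, mul_comm]

/-- Proposition 1: the rank-one reconstruction `Ŵ = W* h hᴴ W* / (hᴴ W* h)`,
`R̂₀ = R₀* + W* − Ŵ` from an optimal SDR solution `(W*, R₀*)` is Hermitian PSD,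
has `rank(Ŵ) ≤ 1`, and satisfies the SNR and power constraints. -/
theorem stmt_5 {M : ℕ} (Wstar R0star : Matrix (Fin M) (Fin M) ℂ)
    (hWs : Wstar.PosSemidef) (hRs : R0star.PosSemidef)
    (h : Fin M → ℂ) (Γ σ2 P0 : ℝ) (hΓ : 0 < Γ) (hσ : 0 < σ2) (hP : 0 < P0)
    (hpos : 0 < (star h ⬝ᵥ Wstar *ᵥ h).re)
    (hSNR : Γ * σ2 ≤ ((vecMulVec h (star h) * Wstar).trace).re)
    (hPow : ((Wstar + R0star).trace).re ≤ P0) :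
    let What : Matrix (Fin M) (Fin M) ℂ :=
      (star h ⬝ᵥ Wstar *ᵥ h)⁻¹ • vecMulVec (Wstar *ᵥ h) (star (Wstar *ᵥ h))
    let R0hat : Matrix (Fin M) (Fin M) ℂ := R0star + Wstar - What
    What.PosSemidef ∧ R0hat.PosSemidef ∧ What.rank ≤ 1 ∧
      Γ * σ2 ≤ ((vecMulVec h (star h) * What).trace).re ∧
      ((What + R0hat).trace).re ≤ P0 := by
  intro What R0hat
  set c : ℂ := star h ⬝ᵥ Wstar *ᵥ h with hc
  set u : Fin M → ℂ := Wstar *ᵥ h with hu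
  have hWhat : What = c⁻¹ • vecMulVec u (star u) := rfl
  have hR0hat : R0hat = R0star + Wstar - What := rfl
  -- c is a nonnegative real with positive real part
  have hc0 : 0 ≤ c := hWs.dotProduct_mulVec_nonneg h
  have hcim : c.im = 0 := by
    rw [Complex.le_def] at hc0
    simpa using hc0.2.symm
  have hcre : 0 < c.re := hpos
  have hcr : c = (c.re : ℂ) := by
    rw [← Complex.re_add_im c, hcim]
    simp
  have hcne : c ≠ 0 := by
    intro h0
    rw [h0] at hcre
    simp at hcre
  have hcstar : star c = c := by
    rw [hcr]
    simp
  -- square root of Wstar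
  set A : Matrix (Fin M) (Fin M) ℂ := (open scoped MatrixOrder in CFC.sqrt Wstar) with hA
  have hAH : Aᴴ = A := (open scoped MatrixOrder in (CFC.sqrt_nonneg Wstar).posSemidef.isHermitian)
  have hAA : A * A = Wstar := (open scoped MatrixOrder in CFC.sqrt_mul_sqrt_self Wstar hWs.nonneg)
  -- key rewriting of inner products through A
  have hdotA : ∀ x : Fin M → ℂ, star x ⬝ᵥ Wstar *ᵥ x
      = star (A *ᵥ x) ⬝ᵥ (A *ᵥ x) := by
    intro x
    rw [← hAA, ← mulVec_mulVec, dotProduct_mulVec, ← hAH, ← star_mulVec, hAH]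
  have htA : ∀ x : Fin M → ℂ, star x ⬝ᵥ u = star (A *ᵥ x) ⬝ᵥ (A *ᵥ h) := by
    intro x
    rw [hu, ← hAA, ← mulVec_mulVec, dotProduct_mulVec, ← hAH, ← star_mulVec, hAH]
  -- the quadratic form of What
  have hq : ∀ x : Fin M → ℂ, star x ⬝ᵥ What *ᵥ x
      = c⁻¹ * ((star u ⬝ᵥ x) * (star x ⬝ᵥ u)) := by
    intro x
    rw [hWhat, smul_mulVec, aux_vmv_mulVec, dotProduct_smul, dotProduct_smul,
      smul_eq_mul, smul_eq_mul]
  have hqreal : ∀ x : Fin M → ℂ, star x ⬝ᵥ What *ᵥ x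
      = (((c.re)⁻¹ * Complex.normSq (star x ⬝ᵥ u) : ℝ) : ℂ) := by
    intro x
    rw [hq x, aux_star_dot u x]
    push_cast
    rw [Complex.normSq_eq_conj_mul_self]
    rw [hcr]
    norm_cast
  -- What is PSD
  have hWhatPSD : What.PosSemidef := by
    refine PosSemidef.of_dotProduct_mulVec_nonneg ?_ ?_
    · rw [hWhat, IsHermitian, conjTranspose_smul, aux_vmv_ct]
      congr 1
      rw [star_inv₀, hcstar]
    · intro x
      rw [hqreal x]
      rw [Complex.zero_le_real]
      exact mul_nonneg (inv_nonneg.mpr hcre.le) (Complex.normSq_nonneg _)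
  -- Wstar - What is PSD via Cauchy–Schwarz
  have hsubPSD : (Wstar - What).PosSemidef := by
    refine PosSemidef.of_dotProduct_mulVec_nonneg ?_ ?_
    · exact hWs.isHermitian.sub hWhatPSD.isHermitian
    · intro x
      rw [sub_mulVec, dotProduct_sub, hqreal x]
      have hw0 : 0 ≤ star x ⬝ᵥ Wstar *ᵥ x := hWs.dotProduct_mulVec_nonneg x
      have hwim : (star x ⬝ᵥ Wstar *ᵥ x).im = 0 := by
        rw [Complex.le_def] at hw0
        simpa using hw0.2.symm
      have hwre : 0 ≤ (star x ⬝ᵥ Wstar *ᵥ x).re := by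
        rw [Complex.le_def] at hw0
        simpa using hw0.1
      have hwr : star x ⬝ᵥ Wstar *ᵥ x = ((star x ⬝ᵥ Wstar *ᵥ x).re : ℂ) := by
        rw [← Complex.re_add_im (star x ⬝ᵥ Wstar *ᵥ x), hwim]
        simp
      rw [hwr]
      norm_cast
      -- Cauchy–Schwarz
      have hCS := aux_cs (A *ᵥ x) (A *ᵥ h)
      rw [← htA x, ← hdotA x] at hCS
      have hch : (star (A *ᵥ h) ⬝ᵥ (A *ᵥ h)).re = c.re := by
        rw [hc, hdotA h]
      rw [hch] at hCS
      have hns : Complex.normSq (star x ⬝ᵥ u) = ‖star x ⬝ᵥ u‖ ^ 2 := by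
        rw [← Complex.sq_norm]
      rw [sub_nonneg, hns]
      rw [inv_mul_le_iff₀ hcre]
      calc ‖star x ⬝ᵥ u‖ ^ 2 ≤ (star x ⬝ᵥ Wstar *ᵥ x).re * c.re := hCS
        _ = c.re * (star x ⬝ᵥ Wstar *ᵥ x).re := mul_comm _ _
  -- R0hat is PSD
  have hR0PSD : R0hat.PosSemidef := by
    rw [hR0hat, add_sub_assoc]
    exact hRs.add hsubPSD
  refine ⟨hWhatPSD, hR0PSD, ?_, ?_, ?_⟩
  · -- rank ≤ 1
    have : What = vecMulVec (c⁻¹ • u) (star u) := by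
      rw [hWhat]
      ext i j
      simp [vecMulVec_apply, mul_assoc]
    rw [this, vecMulVec_eq (Fin 1)]
    calc (replicateCol (Fin 1) (c⁻¹ • u) * replicateRow (Fin 1) (star u)).rank
        ≤ (replicateCol (Fin 1) (c⁻¹ • u)).rank := rank_mul_le_left _ _
      _ ≤ Fintype.card (Fin 1) := rank_le_card_width _
      _ = 1 := Fintype.card_fin 1
  · -- SNR constraint
    rw [aux_trace]
    have h1 : What *ᵥ h = c⁻¹ • ((star u ⬝ᵥ h) • u) := by
      rw [hWhat, smul_mulVec, aux_vmv_mulVec]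
    have h2 : star u ⬝ᵥ h = c := by
      rw [aux_star_dot u h, ← hc, hcstar]
    have h3 : star h ⬝ᵥ What *ᵥ h = c := by
      rw [h1, h2, dotProduct_smul, dotProduct_smul, smul_eq_mul, smul_eq_mul, ← hc,
        ← mul_assoc, inv_mul_cancel₀ hcne, one_mul]
    rw [h3]
    rw [aux_trace] at hSNR
    exact hSNR
  · -- power constraint
    have : What + R0hat = Wstar + R0star := by
      rw [hR0hat]
      abel
    rw [this]
    exact hPow
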